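/- In the ear setup, let α ≠ β be vertices of P with α, β ∈ V₂. Then the set of T-paths from α to β with respect to D in the polygon P equals the set of T-paths from α to β with respect to D₂ in the subpolygon P₂. -/
import Mathlib


/-!
Common definitions: polygons with vertex set `ZMod n`, crossing of diagonals,
dissections, (weak) friezes with values in a semifield, and T-paths.
-/

/-- A *semifield* in the sense of the paper: a set `K` with a commutative, associative
addition and a multiplication making `K` a commutative group, such that multiplication
distributes over addition.  (There is no zero and no subtraction.) -/
class PaperSemifield (K : Type*) extends CommGroup K, AddCommSemigroup K where
  mul_add' : ∀ a b c : K, a * (b + c) = a * b + a * c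

/-- Position of the vertex `x` of the `n`-gon relative to the vertex `a`, going around
the polygon in the positive direction; `relPos n a x = 0` iff `x = a`. -/
def relPos (n : ℕ) (a x : ZMod n) : ℕ := (x - a).val

/-- The vertices `a, b, c, d` of the `n`-gon appear strictly in this cyclic order. -/
def CyclicallyOrdered (n : ℕ) (a b c d : ZMod n) : Prop :=
  0 < relPos n a b ∧ relPos n a b < relPos n a c ∧ relPos n a c < relPos n a d

/-- The diagonals `{a,b}` and `{c,d}` of the `n`-gon *cross*: the four vertices are
distinct and appear in the cyclic order `a, c, b, d` or `a, d, b, c`. -/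
def Crosses (n : ℕ) (a b c d : ZMod n) : Prop :=
  CyclicallyOrdered n a c b d ∨ CyclicallyOrdered n a d b c

/-- `{a, b}` is an edge of the `n`-gon, i.e. joins neighbouring vertices. -/
def IsEdge (n : ℕ) (a b : ZMod n) : Prop := b = a + 1 ∨ a = b + 1

/-- `{a, b}` is an internal diagonal of the `n`-gon. -/
def IsInternalDiag (n : ℕ) (a b : ZMod n) : Prop := a ≠ b ∧ ¬ IsEdge n a b

/-- `w'` is the successor of `w` in the induced cyclic order of the subpolygon of the
`n`-gon with vertex set `W`. -/
def NextIn (n : ℕ) (W : Set (ZMod n)) (w w' : ZMod n) : Prop :=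
  w ∈ W ∧ w' ∈ W ∧ w' ≠ w ∧ ∀ u ∈ W, relPos n w u = 0 ∨ relPos n w w' ≤ relPos n w u

/-- `D` is a dissection of the subpolygon of the `n`-gon with vertex set `W`: a set of
pairwise non-crossing diagonals of the subpolygon joining non-neighbouring vertices. -/
def IsDissectionOf (n : ℕ) (W : Set (ZMod n)) (D : Set (Sym2 (ZMod n))) : Prop :=
  (∀ a b, s(a, b) ∈ D → a ∈ W ∧ b ∈ W ∧ a ≠ b ∧ ¬ NextIn n W a b ∧ ¬ NextIn n W b a) ∧
  (∀ a b c d, s(a, b) ∈ D → s(c, d) ∈ D → ¬ Crosses n a b c d)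

/-- `D` is a dissection of the `n`-gon. -/
def IsDissection (n : ℕ) (D : Set (Sym2 (ZMod n))) : Prop :=
  IsDissectionOf n Set.univ D

/-- `f` is symmetric on pairs of vertices from `W`, i.e. represents a map defined on
unordered diagonals of the subpolygon with vertex set `W`. -/
def SymmOn (n : ℕ) {K : Type*} (W : Set (ZMod n)) (f : ZMod n → ZMod n → K) : Prop :=
  ∀ a b, a ∈ W → b ∈ W → f a b = f b a

/-- The Ptolemy relation for `f` at the crossing diagonals `{a,b}` and `{c,d}`. -/
def PtolemyRel {n : ℕ} {K : Type*} [Mul K] [Add K]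
    (f : ZMod n → ZMod n → K) (a b c d : ZMod n) : Prop :=
  f a b * f c d = f a c * f b d + f a d * f b c

/-- `f` is a weak frieze on the subpolygon with vertex set `W` with respect to `D`:
the Ptolemy relation holds whenever `{a,b}` and `{c,d}` are crossing diagonals of the
subpolygon with `{c,d} ∈ D`. -/
def IsWeakFriezeOn (n : ℕ) {K : Type*} [Mul K] [Add K] (W : Set (ZMod n))
    (D : Set (Sym2 (ZMod n))) (f : ZMod n → ZMod n → K) : Prop :=
  ∀ a b c d : ZMod n, a ∈ W → b ∈ W → c ∈ W → d ∈ W →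
    Crosses n a b c d → s(c, d) ∈ D → PtolemyRel f a b c d

/-- `f` is a weak frieze on the `n`-gon with respect to the dissection `D`. -/
def IsWeakFrieze (n : ℕ) {K : Type*} [Mul K] [Add K]
    (D : Set (Sym2 (ZMod n))) (f : ZMod n → ZMod n → K) : Prop :=
  IsWeakFriezeOn n Set.univ D f

/-- `f` is a frieze on the subpolygon with vertex set `W`: the Ptolemy relation holds
for all crossing diagonals of the subpolygon. -/
def IsFriezeOn (n : ℕ) {K : Type*} [Mul K] [Add K] (W : Set (ZMod n))
    (f : ZMod n → ZMod n → K) : Prop :=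
  ∀ a b c d : ZMod n, a ∈ W → b ∈ W → c ∈ W → d ∈ W →
    Crosses n a b c d → PtolemyRel f a b c d

/-- `f` is a frieze on the `n`-gon. -/
def IsFrieze (n : ℕ) {K : Type*} [Mul K] [Add K] (f : ZMod n → ZMod n → K) : Prop :=
  IsFriezeOn n Set.univ f

/-- The vertices of the `n`-gon realised as a regular convex `n`-gon in the Euclidean
plane. -/
noncomputable def vtx (n : ℕ) (a : ZMod n) : ℝ × ℝ :=
  (Real.cos (2 * Real.pi * (a.val : ℝ) / n), Real.sin (2 * Real.pi * (a.val : ℝ) / n))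

/-- The point with parameter `t` on the segment from `A` to `B`. -/
def segPt (A B : ℝ × ℝ) (t : ℝ) : ℝ × ℝ :=
  ((1 - t) * A.1 + t * B.1, (1 - t) * A.2 + t * B.2)

/-- In the regular realisation of the `n`-gon, the diagonal `{c,d}` crosses the diagonal
`{a,b}` at the interior point with parameter `t` along the segment from `a` to `b`. -/
def CrossesAt (n : ℕ) (a b c d : ZMod n) (t : ℝ) : Prop :=
  0 < t ∧ t < 1 ∧ ∃ s : ℝ, 0 < s ∧ s < 1 ∧
    segPt (vtx n a) (vtx n b) t = segPt (vtx n c) (vtx n d) s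

/-- `l` is a T-path from `a` to `b` with respect to `D` in the subpolygon of the `n`-gon
with vertex set `W`.  Writing `p = l.length` and `π_i = l.getD (i-1) 0` (so the paper's
`π_1, …, π_p` are the entries of `l`), the conditions are: the path starts at `a` and
ends at `b`, uses vertices of `W`; (i) the consecutive pairs are pairwise different
diagonals; (ii) no step crosses a diagonal in `D`; (iii) the steps starting at an
even position (in the paper's 1-based numbering) are diagonals in `D` which cross the
diagonal `{a,b}` at pairwise different points progressing monotonically in the
direction from `a` to `b`. -/
def IsTPathOn (n : ℕ) (W : Set (ZMod n)) (D : Set (Sym2 (ZMod n))) (a b : ZMod n)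
    (l : List (ZMod n)) : Prop :=
  2 ≤ l.length ∧
  l.getD 0 0 = a ∧
  l.getD (l.length - 1) 0 = b ∧
  (∀ i, i < l.length → l.getD i 0 ∈ W) ∧
  (∀ i, i + 1 < l.length → l.getD i 0 ≠ l.getD (i + 1) 0) ∧
  (∀ i j, i < j → j + 1 < l.length →
    s(l.getD i 0, l.getD (i + 1) 0) ≠ s(l.getD j 0, l.getD (j + 1) 0)) ∧
  (∀ i, i + 1 < l.length → ∀ c d, s(c, d) ∈ D →
    ¬ Crosses n (l.getD i 0) (l.getD (i + 1) 0) c d) ∧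
  (∀ i, Odd i → i + 1 < l.length → s(l.getD i 0, l.getD (i + 1) 0) ∈ D) ∧
  (∃ t : ℕ → ℝ,
    (∀ i, Odd i → i + 1 < l.length → CrossesAt n a b (l.getD i 0) (l.getD (i + 1) 0) (t i)) ∧
    (∀ i j, Odd i → Odd j → i < j → j + 1 < l.length → t i < t j))

/-- `l` is a T-path from `a` to `b` with respect to `D` in the `n`-gon. -/
def IsTPath (n : ℕ) (D : Set (Sym2 (ZMod n))) (a b : ZMod n) (l : List (ZMod n)) : Prop :=
  IsTPathOn n Set.univ D a b l

open Classical in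
/-- The (finite) set of all T-paths from `a` to `b` with respect to `D` in the
subpolygon with vertex set `W`.  (Any T-path has pairwise different steps, hence has
length at most `n * n + 1`, so this finite set contains all of them.) -/
noncomputable def TPathFinsetOn (n : ℕ) [NeZero n] (W : Set (ZMod n))
    (D : Set (Sym2 (ZMod n))) (a b : ZMod n) : Finset (List (ZMod n)) :=
  ((Finset.range (n * n + 2)).biUnion fun k =>
    (Finset.univ : Finset (Fin k → ZMod n)).image List.ofFn).filter (IsTPathOn n W D a b)

/-- The (finite) set of all T-paths from `a` to `b` with respect to `D` in the `n`-gon. -/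
noncomputable def TPathFinset (n : ℕ) [NeZero n] (D : Set (Sym2 (ZMod n))) (a b : ZMod n) :
    Finset (List (ZMod n)) :=
  TPathFinsetOn n Set.univ D a b

/-- The weight `f(π)` of a T-path `l`: the product of the values of `f` on the steps at
odd positions (1-based) divided by the product of the values on the steps at even
positions. -/
def pathWeight (n : ℕ) {K : Type*} [CommGroup K] (f : ZMod n → ZMod n → K)
    (l : List (ZMod n)) : K :=
  (∏ i ∈ (Finset.range (l.length - 1)).filter (fun i => Even i),
      f (l.getD i 0) (l.getD (i + 1) 0)) /
  (∏ i ∈ (Finset.range (l.length - 1)).filter (fun i => Odd i),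
      f (l.getD i 0) (l.getD (i + 1) 0))

/-- `f` satisfies the T-path formula with respect to `D` on the subpolygon with vertex
set `W`: for all vertices `a ≠ b` of the subpolygon, `f a b` is the sum of the weights
of all T-paths from `a` to `b`.  Since the semifield `K` has no zero element, the sum is
computed in `WithZero K` (the sum is in fact always a sum of a nonempty collection). -/
def SatisfiesTPathFormulaOn (n : ℕ) [NeZero n] {K : Type*} [PaperSemifield K]
    (W : Set (ZMod n)) (D : Set (Sym2 (ZMod n))) (f : ZMod n → ZMod n → K) : Prop :=
  ∀ a b : ZMod n, a ∈ W → b ∈ W → a ≠ b →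
    WithZero.coe (f a b) = ∑ l ∈ TPathFinsetOn n W D a b, WithZero.coe (pathWeight n f l)

/-- `f` satisfies the T-path formula with respect to `D` on the `n`-gon. -/
def SatisfiesTPathFormula (n : ℕ) [NeZero n] {K : Type*} [PaperSemifield K]
    (D : Set (Sym2 (ZMod n))) (f : ZMod n → ZMod n → K) : Prop :=
  SatisfiesTPathFormulaOn n Set.univ D f

/-- `W` is the vertex set of one of the subpolygons into which the pairwise non-crossing
internal diagonals `E` divide the `n`-gon: `W` has at least three vertices, consecutive
vertices of `W` are joined by an edge of the polygon or by a diagonal in `E`, and no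
diagonal in `E` cuts through `W`. -/
def IsCell (n : ℕ) (E : Set (Sym2 (ZMod n))) (W : Set (ZMod n)) : Prop :=
  3 ≤ W.ncard ∧
  (∀ w w', NextIn n W w w' → (w' = w + 1 ∨ s(w, w') ∈ E)) ∧
  (∀ c d, s(c, d) ∈ E → c ∈ W → d ∈ W → (NextIn n W c d ∨ NextIn n W d c))

section Aux
set_option linter.unusedSectionVars false
variable {n : ℕ} [NeZero n]

lemma relPos_lt (a x : ZMod n) : relPos n a x < n := ZMod.val_lt _

lemma relPos_self (a : ZMod n) : relPos n a a = 0 := by simp [relPos]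

lemma relPos_eq_zero_iff {a x : ZMod n} : relPos n a x = 0 ↔ x = a := by
  unfold relPos; rw [ZMod.val_eq_zero, sub_eq_zero]

lemma relPos_inj {a x y : ZMod n} (h : relPos n a x = relPos n a y) : x = y := by
  have hx : ((relPos n a x : ℕ) : ZMod n) = x - a := ZMod.natCast_zmod_val _
  have hy : ((relPos n a y : ℕ) : ZMod n) = y - a := ZMod.natCast_zmod_val _
  rw [h, hy] at hx
  exact (sub_left_inj.mp hx).symm

lemma val_sub'' (u w : ZMod n) : (u - w).val = (u.val + (n - w.val)) % n := by
  rw [sub_eq_add_neg, ZMod.val_add, ZMod.neg_val']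
  have h1 := ZMod.val_lt u
  have h2 := ZMod.val_lt w
  rcases Nat.eq_zero_or_pos w.val with h | h
  · simp [h]
  · rw [Nat.mod_eq_of_lt (by omega : n - w.val < n)]

lemma relPos_formula (η a x : ZMod n) :
    relPos n a x = (relPos n η x + (n - relPos n η a)) % n := by
  unfold relPos
  rw [show x - a = (x - η) - (a - η) by ring, val_sub'']

lemma mod_helper {u x n : ℕ} (hu : u < n) (hx : x < n) :
    (u + (n - x)) % n = if x ≤ u then u - x else u + (n - x) := by
  split_ifs with h
  · rw [show u + (n - x) = (u - x) + n by omega, Nat.add_mod_right,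
      Nat.mod_eq_of_lt (by omega)]
  · rw [Nat.mod_eq_of_lt (by omega)]

lemma mod_helper0 {x n : ℕ} (hx : x < n) :
    (n - x) % n = if x = 0 then 0 else n - x := by
  split_ifs with h
  · simp [h]
  · rw [Nat.mod_eq_of_lt (by omega)]

lemma finish3 {ζ η a b l0 l1 l2 : ZMod n} (hne : ζ ≠ η) (hab : a ≠ b)
    (h2 : l0 = a) (hb2 : l2 = b) (h50 : l0 ≠ l1) (h51 : l1 ≠ l2)
    (hmem : l1 = ζ ∧ l2 = η ∨ l1 = η ∧ l2 = ζ)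
    (ha' : a = η ∨ a = ζ) (hb' : b = η ∨ b = ζ) : False := by
  rcases ha' with rfl | rfl <;> rcases hmem with ⟨rfl, rfl⟩ | ⟨rfl, rfl⟩ <;> simp_all

lemma finish4 {ζ η a b l0 l1 l2 l3 : ZMod n} (hne : ζ ≠ η) (hab : a ≠ b)
    (h2 : l0 = a) (hb3 : l3 = b) (h50 : l0 ≠ l1) (h60 : s(l0, l1) ≠ s(l1, l2))
    (hmem : l1 = ζ ∧ l2 = η ∨ l1 = η ∧ l2 = ζ)
    (ha' : a = η ∨ a = ζ) (hb' : b = η ∨ b = ζ) : False := by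
  rcases ha' with rfl | rfl <;> rcases hb' with rfl | rfl <;>
    rcases hmem with ⟨rfl, rfl⟩ | ⟨rfl, rfl⟩ <;> simp_all [Sym2.eq_iff]

lemma crosses_swap {a b c d : ZMod n} (h : Crosses n a b c d) : Crosses n a b d c :=
  Or.symm h

lemma no_cross_ear (ζ η : ZMod n) {x y : ZMod n}
    (hx : relPos n η x ≤ relPos n η ζ) (hy : relPos n η y ≤ relPos n η ζ) :
    ¬ Crosses n x y ζ η := by
  have h1 := relPos_lt η x
  have h2 := relPos_lt η y
  have h3 := relPos_lt η ζ
  have h0 : 0 < n := Nat.pos_of_ne_zero (NeZero.ne n)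
  rintro (⟨ha, hb, hc⟩ | ⟨ha, hb, hc⟩) <;>
  · simp only [relPos_formula η x, relPos_self, mod_helper h3 h1, mod_helper h2 h1,
      mod_helper0 h1, Nat.zero_add] at ha hb hc
    split_ifs at ha hb hc <;> omega
end Aux

section Geo
open Real
variable {n : ℕ} [NeZero n]

/-- the linear functional of the line through the chord. -/
noncomputable def phiF (n : ℕ) (η : ZMod n) (R : ℕ) (p : ℝ × ℝ) : ℝ :=
  p.1 * Real.cos ((2 * (η.val : ℝ) + R) * Real.pi / n)
    + p.2 * Real.sin ((2 * (η.val : ℝ) + R) * Real.pi / n)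

lemma real_key (X E rv Rr N K : ℝ) (hN : N ≠ 0) (h : E + rv = X + N * K) :
    (2 * rv - Rr) * Real.pi / N
      = (2 * Real.pi * X / N - (2 * E + Rr) * Real.pi / N) + K * (2 * Real.pi) := by
  field_simp
  ring_nf
  nlinarith [h, Real.pi_pos]

lemma phiF_vtx (η v : ZMod n) (R : ℕ) :
    phiF n η R (vtx n v) = Real.cos ((2 * (relPos n η v : ℝ) - R) * Real.pi / n) := by
  have hn0 : (n : ℝ) ≠ 0 := Nat.cast_ne_zero.mpr (NeZero.ne n)
  have hval : η.val + relPos n η v = v.val + n * ((η.val + relPos n η v) / n) := by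
    have h1 : v.val = (η.val + relPos n η v) % n := by
      conv_lhs => rw [show v = η + (v - η) by ring]
      rw [ZMod.val_add]; rfl
    have h2 := ZMod.val_lt v
    have h3 := Nat.div_add_mod (η.val + relPos n η v) n
    omega
  set k : ℕ := (η.val + relPos n η v) / n with hk
  have hc : ((η.val : ℝ)) + (relPos n η v : ℝ) = (v.val : ℝ) + (n : ℝ) * (k : ℝ) := by
    exact_mod_cast congrArg (Nat.cast : ℕ → ℝ) hval
  have key := real_key (v.val : ℝ) (η.val : ℝ) (relPos n η v : ℝ) (R : ℝ) (n : ℝ) (k : ℝ)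
    hn0 hc
  simp only [phiF, vtx]
  rw [← Real.cos_sub, show ((k : ℝ)) = ((k : ℤ) : ℝ) by push_cast; ring] at *
  rw [key, Real.cos_add_int_mul_two_pi]

lemma cos_chord_ge {n x R : ℕ} (hn : 0 < n) (hx : x ≤ R) (hRn : R ≤ n) :
    Real.cos ((R:ℝ) * Real.pi / n) ≤ Real.cos ((2*(x:ℝ) - R) * Real.pi / n) := by
  have hπ := Real.pi_pos
  have hn' : (0:ℝ) < n := by exact_mod_cast hn
  have hc : (0:ℝ) ≤ Real.pi / n := by positivity
  have hxR : (x:ℝ) ≤ R := by exact_mod_cast hx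
  have hx0 : (0:ℝ) ≤ x := Nat.cast_nonneg x
  have hRn' : (R:ℝ) ≤ n := by exact_mod_cast hRn
  rw [← Real.cos_abs ((2*(x:ℝ) - R) * Real.pi / n)]
  apply Real.cos_le_cos_of_nonneg_of_le_pi (abs_nonneg _)
  · rw [mul_div_assoc]
    calc (R:ℝ) * (Real.pi / n) ≤ n * (Real.pi / n) := mul_le_mul_of_nonneg_right hRn' hc
    _ = Real.pi := by field_simp
  · rw [abs_le]
    constructor <;> rw [mul_div_assoc, mul_div_assoc]
    · have := mul_le_mul_of_nonneg_right (show -(R:ℝ) ≤ 2*x - R by linarith) hc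
      linarith
    · exact mul_le_mul_of_nonneg_right (by linarith) hc

lemma cos_chord_gt {n x R : ℕ} (hn : 0 < n) (hx1 : 1 ≤ x) (hx : x + 1 ≤ R) (hRn : R ≤ n) :
    Real.cos ((R:ℝ) * Real.pi / n) < Real.cos ((2*(x:ℝ) - R) * Real.pi / n) := by
  have hπ := Real.pi_pos
  have hn' : (0:ℝ) < n := by exact_mod_cast hn
  have hc : (0:ℝ) < Real.pi / n := by positivity
  have hxR : (x:ℝ) + 1 ≤ R := by exact_mod_cast hx
  have hx0 : (1:ℝ) ≤ x := by exact_mod_cast hx1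
  have hRn' : (R:ℝ) ≤ n := by exact_mod_cast hRn
  rw [← Real.cos_abs ((2*(x:ℝ) - R) * Real.pi / n)]
  apply Real.cos_lt_cos_of_nonneg_of_le_pi (abs_nonneg _)
  · rw [mul_div_assoc]
    calc (R:ℝ) * (Real.pi / n) ≤ n * (Real.pi / n) :=
      mul_le_mul_of_nonneg_right hRn' hc.le
    _ = Real.pi := by field_simp
  · rw [abs_lt]
    constructor <;> rw [mul_div_assoc, mul_div_assoc]
    · have := mul_lt_mul_of_pos_right (show -(R:ℝ) < 2*x - R by linarith) hc
      linarith
    · exact mul_lt_mul_of_pos_right (by linarith) hc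

variable (η ζ : ZMod n)

lemma phiF_ge (hn : 0 < n) (hRn : relPos n η ζ ≤ n) {v : ZMod n}
    (hv : relPos n η v ≤ relPos n η ζ) :
    Real.cos ((relPos n η ζ : ℝ) * Real.pi / n) ≤ phiF n η (relPos n η ζ) (vtx n v) := by
  rw [phiF_vtx]; exact cos_chord_ge hn hv hRn

lemma phiF_gt (hn : 0 < n) (hRn : relPos n η ζ ≤ n) {v : ZMod n}
    (hv : relPos n η v ≤ relPos n η ζ) (hvη : v ≠ η) (hvζ : v ≠ ζ) :
    Real.cos ((relPos n η ζ : ℝ) * Real.pi / n) < phiF n η (relPos n η ζ) (vtx n v) := by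
  rw [phiF_vtx]
  have h1 : relPos n η v ≠ 0 := fun h => hvη (relPos_eq_zero_iff.mp h)
  have h2 : relPos n η v ≠ relPos n η ζ := fun h => hvζ (relPos_inj h)
  exact cos_chord_gt hn (by omega) (by omega) hRn

lemma phiF_eq (hv : v = η ∨ v = ζ) :
    phiF n η (relPos n η ζ) (vtx n v)
      = Real.cos ((relPos n η ζ : ℝ) * Real.pi / n) := by
  rcases hv with h | h
  · rw [h, phiF_vtx, relPos_self]
    rw [show (2*((0:ℕ):ℝ) - (relPos n η ζ)) * Real.pi / n
        = -((relPos n η ζ : ℝ) * Real.pi / n) by push_cast; ring, Real.cos_neg]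
  · rw [h, phiF_vtx]
    congr 1; ring

lemma phiF_segPt (m : ℕ) (A B : ℝ × ℝ) (t : ℝ) :
    phiF n η m (segPt A B t) = (1 - t) * phiF n η m A + t * phiF n η m B := by
  simp only [phiF, segPt]; ring

lemma crossesAt_on_line (hn : 0 < n) (hRn : relPos n η ζ ≤ n) {t : ℝ} {a b c d : ZMod n}
    (ha : relPos n η a ≤ relPos n η ζ) (hb : relPos n η b ≤ relPos n η ζ)
    (hc : c = η ∨ c = ζ) (hd : d = η ∨ d = ζ)
    (h : CrossesAt n a b c d t) : (a = η ∨ a = ζ) ∧ (b = η ∨ b = ζ) := by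
  obtain ⟨ht0, ht1, s, hs0, hs1, heq⟩ := h
  set R := relPos n η ζ with hR
  set K := Real.cos ((R : ℝ) * Real.pi / n) with hK
  have e1 : (1 - t) * phiF n η R (vtx n a) + t * phiF n η R (vtx n b) = K := by
    rw [← phiF_segPt, heq, phiF_segPt, phiF_eq η ζ hc, phiF_eq η ζ hd]; ring
  have gA := phiF_ge η ζ hn hRn ha
  have gB := phiF_ge η ζ hn hRn hb
  constructor
  · by_contra hcon
    push_neg at hcon
    have := phiF_gt η ζ hn hRn ha hcon.1 hcon.2
    nlinarith
  · by_contra hcon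
    push_neg at hcon
    have := phiF_gt η ζ hn hRn hb hcon.1 hcon.2
    nlinarith

end Geo

/-- **Ear setup.**  `D = {d} ⊔ D₂` is a dissection of the `n`-gon, where `d = {ζ,η}`
divides the polygon into subpolygons `P₁` (vertex set `V₁ = {ε : ζ ≤ ε ≤ η}`, an ear)
and `P₂` (vertex set `V₂ = {ε : η ≤ ε ≤ ζ}`), and `D₂` is a dissection of `P₂`.
If `α ≠ β` are vertices of `P₂`, then the T-paths from `α` to `β` with respect to `D`
in `P` are exactly the T-paths from `α` to `β` with respect to `D₂` in `P₂`. -/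
theorem ear_tPaths_eq_tPaths_of_subpolygon
    (n : ℕ) (hn : 3 ≤ n) (ζ η : ZMod n) (hζη : IsInternalDiag n ζ η)
    (D D₂ : Set (Sym2 (ZMod n)))
    (hD : IsDissection n D)
    (hsplit : D = insert s(ζ, η) D₂) (hdm : s(ζ, η) ∉ D₂)
    (hD₂ : IsDissectionOf n {ε : ZMod n | relPos n η ε ≤ relPos n η ζ} D₂)
    (a b : ZMod n) (hab : a ≠ b)
    (ha : a ∈ {ε : ZMod n | relPos n η ε ≤ relPos n η ζ})
    (hb : b ∈ {ε : ZMod n | relPos n η ε ≤ relPos n η ζ}) :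
    {l : List (ZMod n) | IsTPath n D a b l} =
      {l : List (ZMod n) |
        IsTPathOn n {ε : ZMod n | relPos n η ε ≤ relPos n η ζ} D₂ a b l} := by
  haveI : NeZero n := ⟨by omega⟩
  obtain ⟨hne, hedge⟩ := hζη
  have hRlt : relPos n η ζ < n := relPos_lt η ζ
  have hR1 : relPos n η ζ ≠ 0 := fun h => hne (relPos_eq_zero_iff.mp h)
  have hRne1 : relPos n η ζ ≠ 1 := by
    intro h
    have hcast : ζ - η = ((1:ℕ) : ZMod n) := by
      rw [← h]; exact (ZMod.natCast_zmod_val _).symm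
    rw [Nat.cast_one] at hcast
    exact hedge (Or.inr (by linear_combination hcast))
  have hRnen1 : relPos n η ζ ≠ n - 1 := by
    intro h
    have hcast : ζ - η = ((n - 1 : ℕ) : ZMod n) := by
      rw [← h]; exact (ZMod.natCast_zmod_val _).symm
    have hn1 : ((n - 1 : ℕ) : ZMod n) = -1 := by
      push_cast [Nat.cast_sub (show 1 ≤ n by omega)]
      rw [ZMod.natCast_self]; ring
    rw [hn1] at hcast
    exact hedge (Or.inl (by linear_combination -hcast))
  have hR2 : 2 ≤ relPos n η ζ := by omega
  have hRn : relPos n η ζ ≤ n - 2 := by omega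
  have hDmem : ∀ c d : ZMod n, s(c, d) ∈ D →
      relPos n η c ≤ relPos n η ζ ∧ relPos n η d ≤ relPos n η ζ := by
    intro c d hcd
    rw [hsplit, Set.mem_insert_iff] at hcd
    rcases hcd with hcd | hcd
    · rw [Sym2.eq_iff] at hcd
      rcases hcd with ⟨rfl, rfl⟩ | ⟨rfl, rfl⟩
      · exact ⟨le_refl _, by rw [relPos_self]; omega⟩
      · exact ⟨by rw [relPos_self]; omega, le_refl _⟩
    · obtain ⟨h1, h2, -⟩ := hD₂.1 c d hcd
      exact ⟨h1, h2⟩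
  ext l
  simp only [Set.mem_setOf_eq]
  unfold IsTPath
  constructor
  · rintro ⟨h1, h2, h3, h4, h5, h6, h7, h8, t, ht1, ht2⟩
    have hvert : ∀ i, i < l.length → relPos n η (l.getD i 0) ≤ relPos n η ζ := by
      intro i hi
      by_contra hcon
      push_neg at hcon
      have hi0 : i ≠ 0 := by
        intro h; rw [h, h2] at hcon; exact absurd ha (not_le.mpr hcon)
      have hil : i ≠ l.length - 1 := by
        intro h; rw [h, h3] at hcon; exact absurd hb (not_le.mpr hcon)
      rcases Nat.even_or_odd i with he | ho
      · have hodd : Odd (i - 1) := by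
          rw [Nat.odd_iff]; rw [Nat.even_iff] at he; omega
        have hstep := h8 (i - 1) hodd (by omega)
        have hmem := hDmem _ _ hstep
        have hrw : i - 1 + 1 = i := by omega
        rw [hrw] at hmem
        exact absurd hmem.2 (not_le.mpr hcon)
      · have hstep := h8 i ho (by omega)
        exact absurd (hDmem _ _ hstep).1 (not_le.mpr hcon)
    have hodds : ∀ i, Odd i → i + 1 < l.length →
        s(l.getD i 0, l.getD (i + 1) 0) ∈ D₂ := by
      intro i hoi hil
      have hmem := h8 i hoi hil
      rw [hsplit, Set.mem_insert_iff] at hmem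
      rcases hmem with hmem | hmem
      · exfalso
        have hCD : (l.getD i 0 = η ∨ l.getD i 0 = ζ) ∧
            (l.getD (i + 1) 0 = η ∨ l.getD (i + 1) 0 = ζ) := by
          rw [Sym2.eq_iff] at hmem
          rcases hmem with ⟨h', h''⟩ | ⟨h', h''⟩
          · exact ⟨Or.inr h', Or.inl h''⟩
          · exact ⟨Or.inl h', Or.inr h''⟩
        have hab' := crossesAt_on_line η ζ (by omega) (by omega) ha hb hCD.1 hCD.2
          (ht1 i hoi hil)
        have hall : ∀ j, Odd j → j + 1 < l.length →
            s(l.getD j 0, l.getD (j + 1) 0) = s(ζ, η) := by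
          intro j hoj hjl
          have hmem' := h8 j hoj hjl
          rw [hsplit, Set.mem_insert_iff] at hmem'
          rcases hmem' with hmem' | hmem'
          · exact hmem'
          · exfalso
            obtain ⟨hc1, hc2, hne', -⟩ := hD₂.1 _ _ hmem'
            obtain ⟨ht0', ht1'', s', hs0', hs1', heq'⟩ := ht1 j hoj hjl
            have hswap : CrossesAt n (l.getD j 0) (l.getD (j + 1) 0) a b s' :=
              ⟨hs0', hs1', t j, ht0', ht1'', heq'.symm⟩
            have hres := crossesAt_on_line η ζ (by omega) (by omega) hc1 hc2
              hab'.1 hab'.2 hswap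
            have hcd' : s(l.getD j 0, l.getD (j + 1) 0) = s(ζ, η) := by
              rcases hres.1 with h' | h' <;> rcases hres.2 with h'' | h'' <;>
                first
                  | exact absurd (h'.trans h''.symm) hne'
                  | (rw [h', h'']; exact Sym2.eq_swap)
                  | rw [h', h'']
            exact hdm (hcd' ▸ hmem')
        have h1lt : 1 + 1 < l.length := by
          have : 1 ≤ i := hoi.pos
          omega
        have hi1 : i = 1 := by
          by_contra hne''
          have hgt : (1:ℕ) < i := by
            rcases hoi with ⟨k, hk⟩; omega
          exact h6 1 i hgt hil ((hall 1 ⟨0, rfl⟩ h1lt).trans (hall i hoi hil).symm)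
        have hlen4 : l.length ≤ 4 := by
          by_contra hlen'
          push_neg at hlen'
          exact h6 1 3 (by omega) (by omega)
            ((hall 1 ⟨0, rfl⟩ (by omega)).trans (hall 3 ⟨1, rfl⟩ (by omega)).symm)
        subst hi1
        have hL : l.length = 3 ∨ l.length = 4 := by omega
        rcases hL with hL | hL
        · have hb2 : l.getD 2 0 = b := by rw [← h3, hL]
          have h50 := h5 0 (by omega)
          have h51 := h5 1 (by omega)
          rw [Sym2.eq_iff] at hmem
          exact finish3 hne hab h2 hb2 h50 h51 hmem hab'.1 hab'.2
        · have hb3 : l.getD 3 0 = b := by rw [← h3, hL]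
          have h50 := h5 0 (by omega)
          have h60 := h6 0 1 (by omega) (by omega)
          rw [Sym2.eq_iff] at hmem
          exact finish4 hne hab h2 hb3 h50 h60 hmem hab'.1 hab'.2
      · exact hmem
    exact ⟨h1, h2, h3, hvert, h5, h6,
      fun i hi c d hcd => h7 i hi c d (by rw [hsplit]; exact Set.mem_insert_of_mem _ hcd),
      hodds, t, ht1, ht2⟩
  · rintro ⟨h1, h2, h3, h4, h5, h6, h7, h8, t, ht1, ht2⟩
    refine ⟨h1, h2, h3, fun i _ => Set.mem_univ _, h5, h6, ?_,
      fun i hoi hil => by rw [hsplit]; exact Set.mem_insert_of_mem _ (h8 i hoi hil),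
      t, ht1, ht2⟩
    intro i hi c d hcd
    rw [hsplit, Set.mem_insert_iff] at hcd
    rcases hcd with hcd | hcd
    · have hx := h4 i (by omega)
      have hy := h4 (i + 1) (by omega)
      rw [Sym2.eq_iff] at hcd
      rcases hcd with ⟨h', h''⟩ | ⟨h', h''⟩
      · rw [h', h'']; exact no_cross_ear ζ η hx hy
      · rw [h', h'']; exact fun hcr => no_cross_ear ζ η hx hy (crosses_swap hcr)
    · exact h7 i hi c d hcd
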